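/- Let p be a prime element of 𝒪 with p ≡ 1 (mod 3), let k > 1 be an integer and write k = h + 3l with h ∈ {0,1,2} and l ≥ 0 integers, and let z, b ∈ 𝒪 with zb coprime to p. Then ∑_{x (p^k)*} (x/p^k)₃ · e(b·x⁻¹/p^k) · T(z·x, 0, p^h) = 0. -/

import Mathlib

noncomputable section

namespace CubicSeries

open scoped Classical

def ω : ℂ := Complex.exp (2 * Real.pi * Complex.I / 3)

def O : Subring ℂ := Subring.closure {ω}

abbrev OK : Type _ := O

def δ : ℂ := ω - ω ^ 2

def eC (z : ℂ) : ℂ :=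
  Complex.exp (2 * Real.pi * Complex.I * (z / δ + (starRingEnd ℂ) (z / δ)))

def rep {I : Ideal OK} (x : OK ⧸ I) : OK :=
  Function.surjInv Ideal.Quotient.mk_surjective x

/-- `N(c) = |𝒪/(c)|`, the absolute norm. -/
def Nm (c : OK) : ℕ := Nat.card (OK ⧸ Ideal.span {c})

/-- `φ(c) = |(𝒪/(c))ˣ|`. -/
def totient (c : OK) : ℕ := Nat.card ((OK ⧸ Ideal.span {c})ˣ)

/-- a multiplicative inverse modulo `c` (an arbitrary element when `x` is not invertible). -/
def invMod (c x : OK) : OK :=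
  rep (Ring.inverse (Ideal.Quotient.mk (Ideal.span {c}) x))

def T (A B c : OK) : ℂ :=
  ∑ᶠ x : OK ⧸ Ideal.span {c}, eC (((A * rep x ^ 3 + B * rep x : OK) : ℂ) / (c : ℂ))

/-- The cubic residue symbol `(x/π)₃` for a prime element `π` not dividing `3`:
the unique cube root of unity congruent to `x^{(N(π)-1)/3}` mod `π`, and `0` if `π ∣ x`. -/
def cubicCharP (π x : OK) : OK :=
  if h : ∃ ζ : OK, ζ ^ 3 = 1 ∧ π ∣ ζ - x ^ ((Nm π - 1) / 3) ∧ ¬ π ∣ x then h.choose else 0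

/-- The cubic residue symbol `(x/c)₃` for `c` coprime to `3`, defined via a factorization of
`c` into a unit times prime elements (with multiplicity). -/
def cubicChar (c x : OK) : OK :=
  if h : ∃ fs : OKˣ × Multiset OK, (∀ π ∈ fs.2, Prime π) ∧ c = (fs.1 : OK) * fs.2.prod
  then (h.choose.2.map fun π => cubicCharP π x).prod
  else 0

/-- The cubic Gauss sum `g(a,c) = ∑_{x (c)*} (x/c)₃ e(ax/c)`. -/
def gaussSum (a c : OK) : ℂ :=
  ∑ᶠ u : (OK ⧸ Ideal.span {c})ˣ,
    ((cubicChar c (rep u.val) : OK) : ℂ) * eC (((a * rep u.val : OK) : ℂ) / (c : ℂ))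

/-- The Möbius function: `μ(c) = (−1)^r` if `(c)` is a product of `r` distinct prime ideals,
and `μ(c) = 0` otherwise. -/
def moebius (c : OK) : ℤ :=
  if h : ∃ s : Finset (Ideal OK), (∀ P ∈ s, Prime P) ∧ Ideal.span {c} = ∏ P ∈ s, P
  then (-1) ^ h.choose.card
  else 0

/-- `p^n` modulo `c`, where a negative exponent means the inverse of `p^{-n}` mod `c`. -/
def ppow (c p : OK) (n : ℤ) : OK :=
  if 0 ≤ n then p ^ n.toNat else invMod c (p ^ (-n).toNat)

/-- A choice of generator of a (principal) ideal. -/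
def gen (J : Ideal OK) : OK := if h : ∃ q : OK, Ideal.span {q} = J then h.choose else 0

/-- A choice of cofactor: `cofactor c q` is a `d` with `c = q·d`, when one exists. -/
def cofactor (c q : OK) : OK := if h : ∃ d : OK, c = q * d then h.choose else 0


/-!
Multiplication by the units `1 + p^(k-1) s`, `s` modulo `p`, permutes `(𝒪/p^k)ˣ`. It does not change
`(x/p)₃`, nor `T(zx, 0, p^h)`: for `h < k` because `zx` moves by a multiple of `p^(k-1)`, and for
`h = k = 2` because the substitution `x ↦ (1 + p w) x` absorbs the change of the cubic coefficient
(`p ∤ 3z` by `p ≡ 1 mod 3`). Since `x⁻¹` becomes `(1 - p^(k-1) s) x⁻¹`, the summand picks up the factor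
`e(-b x⁻¹ s / p)`, and averaging over `s` leaves a complete additive character sum modulo `p`,
which vanishes as `p ∤ b x⁻¹`.
-/

open Complex in
lemma omega_cube : ω ^ 3 = 1 := by
  rw [ω, ← exp_nat_mul, show ((3 : ℕ) : ℂ) * (2 * Real.pi * I / 3) = 2 * Real.pi * I by push_cast; ring]
  exact exp_two_pi_mul_I

lemma omega_ne_one : ω ≠ 1 := by
  rw [ω, Ne, Complex.exp_eq_one_iff]
  rintro ⟨n, hn⟩
  have h3n : ((1 : ℤ) : ℂ) = ((3 * n : ℤ) : ℂ) := by
    push_cast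
    linear_combination (norm := skip) 3 * hn / (2 * Real.pi * Complex.I)
    field_simp [Real.pi_ne_zero, Complex.I_ne_zero]
    ring
  have : (1 : ℤ) = 3 * n := by exact_mod_cast h3n
  omega

lemma omega_sq : ω ^ 2 = -1 - ω := by
  have h : (ω - 1) * (ω ^ 2 + ω + 1) = 0 := by linear_combination omega_cube
  rcases mul_eq_zero.mp h with h1 | h2
  · exact absurd (sub_eq_zero.mp h1) omega_ne_one
  · linear_combination h2

lemma conj_omega : (starRingEnd ℂ) ω = ω ^ 2 := by
  have h : ω * (starRingEnd ℂ) ω = 1 := by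
    rw [Complex.mul_conj, Complex.normSq_eq_norm_sq, ω, Complex.norm_exp]
    simp
  linear_combination (ω ^ 2) * h - (starRingEnd ℂ) ω * omega_cube

lemma omega_ne_omega_sq : ω ≠ ω ^ 2 := by
  intro h
  have : ω * (ω - 1) = 0 := by linear_combination -h
  rcases mul_eq_zero.mp this with h0 | h1
  · exact Complex.exp_ne_zero _ h0
  · exact omega_ne_one (sub_eq_zero.mp h1)

lemma omega_im_ne_zero : ω.im ≠ 0 := by
  rw [Ne, ← Complex.conj_eq_iff_im, conj_omega]
  exact omega_ne_omega_sq.symm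

lemma exists_ofReal_add_mul_omega (z : ℂ) : ∃ u v : ℝ, z = u + v * ω := by
  refine ⟨z.re - z.im / ω.im * ω.re, z.im / ω.im, Complex.ext ?_ ?_⟩ <;>
    simp [field, omega_im_ne_zero]

/-- `Tr((u + vω)/δ) = v`. -/
lemma eC_ofReal_add_mul_omega (u v : ℝ) :
    eC (u + v * ω) = Complex.exp (2 * Real.pi * Complex.I * v) := by
  have hδ : δ ≠ 0 := sub_ne_zero.mpr omega_ne_omega_sq
  have conj_delta : (starRingEnd ℂ) δ = -δ := by
    rw [δ, map_sub, map_pow, conj_omega]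
    linear_combination -ω * omega_cube
  rw [eC, map_div₀, conj_delta, map_add, map_mul, conj_omega, Complex.conj_ofReal,
    Complex.conj_ofReal]
  congr 2
  field_simp
  rw [δ]
  ring

lemma eC_add (x y : ℂ) : eC (x + y) = eC x * eC y := by
  rw [eC, eC, eC, ← Complex.exp_add, add_div, map_add]
  ring_nf

lemma eC_zero : eC 0 = 1 := by
  simp [eC]

lemma eC_ofReal_add_mul_omega_eq_one_iff (u v : ℝ) :
    eC (u + v * ω) = 1 ↔ ∃ n : ℤ, v = n := by
  rw [eC_ofReal_add_mul_omega, Complex.exp_eq_one_iff]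
  refine exists_congr fun n => ⟨fun h => ?_, fun h => by rw [h]; push_cast; ring⟩
  have h2 : ((v : ℂ) - n) * (2 * Real.pi * Complex.I) = 0 := by linear_combination h
  exact_mod_cast (by simpa [sub_eq_zero, Real.pi_ne_zero, Complex.I_ne_zero] using h2 : (v : ℂ) = n)

def Ω : OK := ⟨ω, Subring.subset_closure rfl⟩

@[simp]
lemma coe_Omega : ((Ω : OK) : ℂ) = ω := rfl

lemma exists_int_coords (x : OK) : ∃ m n : ℤ, (x : ℂ) = m + n * ω := by
  obtain ⟨x, hx⟩ := x
  induction hx using Subring.closure_induction with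
  | mem y hy => exact ⟨0, 1, by simp [Set.mem_singleton_iff.mp hy]⟩
  | zero => exact ⟨0, 0, by simp⟩
  | one => exact ⟨1, 0, by simp⟩
  | add a b _ _ ha hb =>
    obtain ⟨m, n, rfl⟩ := ha
    obtain ⟨m', n', rfl⟩ := hb
    exact ⟨m + m', n + n', by push_cast; ring⟩
  | neg a _ ha =>
    obtain ⟨m, n, rfl⟩ := ha
    exact ⟨-m, -n, by push_cast; ring⟩
  | mul a b _ _ ha hb =>
    obtain ⟨m, n, rfl⟩ := ha
    obtain ⟨m', n', rfl⟩ := hb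
    refine ⟨m * m' - n * n', m * n' + n * m' - n * n', ?_⟩
    push_cast
    linear_combination (n : ℂ) * n' * omega_sq

instance : Module.Finite ℤ OK := by
  refine ⟨⟨{1, Ω}, eq_top_iff.mpr fun x _ => ?_⟩⟩
  obtain ⟨m, n, hx⟩ := exists_int_coords x
  have : x = m • (1 : OK) + n • Ω := Subtype.ext (by simpa using hx)
  rw [this]
  exact add_mem (Submodule.smul_mem _ _ (Submodule.subset_span (by simp)))
    (Submodule.smul_mem _ _ (Submodule.subset_span (by simp)))

instance : Module.Free ℤ OK := Module.free_of_finite_type_torsion_free'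

lemma finite_quotient_span_singleton {c : OK} (hc : c ≠ 0) : Finite (OK ⧸ Ideal.span {c}) :=
  Ideal.finiteQuotientOfFreeOfNeBot _ (by rwa [Ne, Ideal.span_singleton_eq_bot])

lemma eC_coe (x : OK) : eC x = 1 := by
  obtain ⟨m, n, hx⟩ := exists_int_coords x
  simpa [hx] using (eC_ofReal_add_mul_omega_eq_one_iff m n).mpr ⟨n, rfl⟩

lemma eC_div_congr {c a a' : OK} (h : c ∣ a - a') :
    eC ((a : ℂ) / (c : ℂ)) = eC ((a' : ℂ) / (c : ℂ)) := by
  obtain ⟨d, hd⟩ := h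
  rcases eq_or_ne c 0 with rfl | hc
  · rw [zero_mul, sub_eq_zero] at hd
    rw [hd]
  have hc' : (c : ℂ) ≠ 0 := by exact_mod_cast hc
  rw [eq_add_of_sub_eq' hd]
  push_cast
  rw [add_div, mul_div_cancel_left₀ _ hc', eC_add, eC_coe, mul_one]

lemma rep_mk {I : Ideal OK} (x : OK ⧸ I) : Ideal.Quotient.mk I (rep x) = x :=
  Function.surjInv_eq Ideal.Quotient.mk_surjective x

lemma mk_eq_mk_iff {c a b : OK} :
    Ideal.Quotient.mk (Ideal.span {c}) a = Ideal.Quotient.mk (Ideal.span {c}) b ↔ c ∣ a - b := by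
  rw [Ideal.Quotient.eq, Ideal.mem_span_singleton]

lemma dvd_rep_sub_of_mk_eq {c a : OK} {x : OK ⧸ Ideal.span {c}}
    (h : Ideal.Quotient.mk _ a = x) : c ∣ rep x - a :=
  mk_eq_mk_iff.mp (by rw [rep_mk, h])

lemma invMod_rep_unit {c : OK} (u : (OK ⧸ Ideal.span {c})ˣ) : invMod c (rep u.val) = rep u⁻¹.val := by
  rw [invMod, rep_mk, Ring.inverse_unit]

lemma eC_mul_rep_div_congr {c a b : OK} {x : OK ⧸ Ideal.span {c}}
    (h : Ideal.Quotient.mk _ b = x) : eC ((a * rep x : OK) / c) = eC ((a * b : OK) / c) :=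
  eC_div_congr (by rw [← mul_sub]; exact dvd_mul_of_dvd_right (dvd_rep_sub_of_mk_eq h) a)

def addCharMod (c a : OK) : AddChar (OK ⧸ Ideal.span {c}) ℂ where
  toFun s := eC ((a * rep s : OK) / c)
  map_zero_eq_one' := by
    rw [eC_mul_rep_div_congr (map_zero _)]
    simp [eC_zero]
  map_add_eq_mul' x y := by
    rw [eC_mul_rep_div_congr (b := rep x + rep y) (by rw [map_add, rep_mk, rep_mk])]
    push_cast
    rw [mul_add, add_div, eC_add]

lemma exists_eC_ne_one {p a : OK} (hp : p ≠ 0) (hpa : ¬ p ∣ a) :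
    ∃ s : OK, eC ((a * s : OK) / p) ≠ 1 := by
  by_contra! h
  obtain ⟨u, v, huv⟩ := exists_ofReal_add_mul_omega ((a : ℂ) / p)
  obtain ⟨n, rfl⟩ := (eC_ofReal_add_mul_omega_eq_one_iff u v).mp (by simpa [huv] using h 1)
  obtain ⟨n', hn'⟩ := (eC_ofReal_add_mul_omega_eq_one_iff (-n) (u - n)).mp <| by
    convert h Ω using 2
    push_cast
    rw [coe_Omega, mul_div_right_comm, huv]
    linear_combination (-(n : ℂ)) * omega_sq
  apply hpa
  refine ⟨((n' + n : ℤ) : OK) + (n : ℤ) * Ω, Subtype.ext ?_⟩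
  have hp' : (p : ℂ) ≠ 0 := by exact_mod_cast hp
  rw [eq_add_of_sub_eq hn', div_eq_iff hp'] at huv
  rw [huv]
  push_cast
  rw [coe_Omega]
  ring

lemma finsum_eC_mul_rep_eq_zero {p a : OK} (hp : p ≠ 0) (hpa : ¬ p ∣ a) :
    ∑ᶠ s : OK ⧸ Ideal.span {p}, eC ((a * rep s : OK) / p) = 0 := by
  have := finite_quotient_span_singleton hp
  have := Fintype.ofFinite (OK ⧸ Ideal.span {p})
  rw [finsum_eq_sum_of_fintype]
  refine AddChar.sum_eq_zero_of_ne_one (ψ := addCharMod p a) (AddChar.ne_one_iff.mpr ?_)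
  obtain ⟨s, hs⟩ := exists_eC_ne_one hp hpa
  refine ⟨Ideal.Quotient.mk _ s, ?_⟩
  rwa [addCharMod, AddChar.coe_mk, eC_mul_rep_div_congr rfl]

/-- The predicate that `cubicCharP π x` chooses from depends on `x` only modulo `π`. -/
lemma cubicCharP_congr {π x y : OK} (hxy : π ∣ x - y) : cubicCharP π x = cubicCharP π y := by
  have hpow := hxy.trans (sub_dvd_pow_sub_pow x y ((Nm π - 1) / 3))
  have hpred : (fun ζ : OK => ζ ^ 3 = 1 ∧ π ∣ ζ - x ^ ((Nm π - 1) / 3) ∧ ¬ π ∣ x) =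
      fun ζ => ζ ^ 3 = 1 ∧ π ∣ ζ - y ^ ((Nm π - 1) / 3) ∧ ¬ π ∣ y := by
    ext ζ
    rw [dvd_iff_dvd_of_dvd_sub hxy,
      dvd_iff_dvd_of_dvd_sub (by rwa [sub_sub_sub_cancel_left, ← dvd_neg, neg_sub])]
  unfold cubicCharP
  rw [hpred]

lemma T_congr {c A A' : OK} (B : OK) (h : c ∣ A - A') : T A B c = T A' B c :=
  finsum_congr fun x => eC_div_congr <| by
    rw [show A * rep x ^ 3 + B * rep x - (A' * rep x ^ 3 + B * rep x) = (A - A') * rep x ^ 3 by ring]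
    exact dvd_mul_of_dvd_left h _

lemma T_mul_cube_mul {c A B t : OK} (ht : IsUnit (Ideal.Quotient.mk (Ideal.span {c}) t)) :
    T (A * t ^ 3) (B * t) c = T A B c := by
  symm
  rw [T, T, ← finsum_comp_equiv ht.unit.mulLeft]
  refine finsum_congr fun x => eC_div_congr ?_
  have hx : c ∣ rep (ht.unit.mulLeft x) - t * rep x :=
    dvd_rep_sub_of_mk_eq (by rw [map_mul, rep_mk]; rfl)
  generalize ht.unit.mulLeft x = y at hx ⊢
  rw [show A * rep y ^ 3 + B * rep y - (A * t ^ 3 * rep x ^ 3 + B * t * rep x)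
    = A * (rep y ^ 3 - (t * rep x) ^ 3) + B * (rep y - t * rep x) by ring]
  exact dvd_add (dvd_mul_of_dvd_right (hx.trans (sub_dvd_pow_sub_pow _ _ 3)) A)
    (dvd_mul_of_dvd_right hx B)

lemma exists_dvd_mul_sub_one {p a : OK} (hp : Prime p) (ha : ¬ p ∣ a) : ∃ w : OK, p ∣ a * w - 1 := by
  have := finite_quotient_span_singleton hp.ne_zero
  have : (Ideal.span {p}).IsPrime := (Ideal.span_singleton_prime hp.ne_zero).mpr hp
  have hane : Ideal.Quotient.mk (Ideal.span {p}) a ≠ 0 := by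
    rwa [Ne, Ideal.Quotient.eq_zero_iff_mem, Ideal.mem_span_singleton]
  obtain ⟨w, hw⟩ := (Finite.isField_of_domain (OK ⧸ Ideal.span {p})).mul_inv_cancel hane
  exact ⟨rep w, mk_eq_mk_iff.mp (by rw [map_mul, rep_mk, hw, map_one])⟩

/-- Hensel's lemma for `x ↦ A x³`: when `p ∤ 3A`, a change `A ↦ A + p d` of the coefficient is
absorbed by the substitution `x ↦ (1 + p w) x` with `3 A w ≡ -d (mod p)`. -/
lemma T_congr_sq {p A A' : OK} (hp : Prime p) (h3A : ¬ p ∣ 3 * A) (h : p ∣ A - A') :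
    T A 0 (p ^ 2) = T A' 0 (p ^ 2) := by
  obtain ⟨d, hd⟩ := h
  obtain ⟨a, g, hg⟩ := exists_dvd_mul_sub_one hp h3A
  have ht : IsUnit (Ideal.Quotient.mk (Ideal.span {p ^ 2}) (1 + p * (-(d * a)))) :=
    IsUnit.of_mul_eq_one (Ideal.Quotient.mk _ (1 - p * (-(d * a)))) <| by
      rw [← map_mul, ← map_one (Ideal.Quotient.mk _), mk_eq_mk_iff]
      exact ⟨-(d * a) ^ 2, by ring⟩
  have hcube : p ^ 2 ∣ A * (1 + p * (-(d * a))) ^ 3 - A' :=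
    ⟨-(d * g) + 3 * A * (d * a) ^ 2 - A * p * (d * a) ^ 3, by linear_combination hd - p * d * hg⟩
  calc T A 0 (p ^ 2) = T (A * (1 + p * (-(d * a))) ^ 3) (0 * (1 + p * (-(d * a)))) (p ^ 2) :=
        (T_mul_cube_mul ht).symm
    _ = T A' 0 (p ^ 2) := by rw [zero_mul]; exact T_congr 0 hcube

lemma T_congr_of_pow_dvd {p A A' : OK} {h n : ℕ} (hp : Prime p) (h3A : ¬ p ∣ 3 * A) (hh : h < 3)
    (hhn : h ≤ n + 2) (hA : p ^ (n + 1) ∣ A - A') : T A 0 (p ^ h) = T A' 0 (p ^ h) := by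
  rcases Nat.lt_or_ge h (n + 2) with hlt | hge
  · exact T_congr 0 ((pow_dvd_pow p (by omega)).trans hA)
  · obtain rfl : h = 2 := by omega
    obtain rfl : n = 0 := by omega
    exact T_congr_sq hp h3A (by simpa using hA)

lemma not_dvd_rep_unit {c m : OK} (hm : ¬ IsUnit m) (hmc : m ∣ c) (u : (OK ⧸ Ideal.span {c})ˣ) :
    ¬ m ∣ rep u.val := by
  intro hu
  have hinv : c ∣ rep u.val * rep u⁻¹.val - 1 :=
    mk_eq_mk_iff.mp (by rw [map_mul, rep_mk, rep_mk, Units.mul_inv, map_one])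
  exact hm (isUnit_of_dvd_one ((dvd_iff_dvd_of_dvd_sub (hmc.trans hinv)).mp (hu.mul_right _)))

section shiftUnit

variable {c m : OK} (hcm : c ∣ m ^ 2)

def shiftUnit (s : OK) : (OK ⧸ Ideal.span {c})ˣ :=
  Units.mkOfMulEqOne (Ideal.Quotient.mk _ (1 + m * s)) (Ideal.Quotient.mk _ (1 - m * s)) <| by
    rw [← map_mul, ← map_one (Ideal.Quotient.mk _), mk_eq_mk_iff,
      show (1 + m * s) * (1 - m * s) - 1 = m ^ 2 * -s ^ 2 by ring]
    exact dvd_mul_of_dvd_left hcm _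

variable (s : OK) (u : (OK ⧸ Ideal.span {c})ˣ)

lemma dvd_rep_shiftUnit_mul_sub :
    c ∣ rep (shiftUnit hcm s * u).val - (1 + m * s) * rep u.val :=
  dvd_rep_sub_of_mk_eq (by rw [map_mul, rep_mk]; rfl)

lemma dvd_rep_shiftUnit_mul_sub_rep (hmc : m ∣ c) :
    m ∣ rep (shiftUnit hcm s * u).val - rep u.val := by
  rw [show rep (shiftUnit hcm s * u).val - rep u.val =
    rep (shiftUnit hcm s * u).val - (1 + m * s) * rep u.val + m * (s * rep u.val) by ring]
  exact dvd_add (hmc.trans (dvd_rep_shiftUnit_mul_sub hcm s u)) (dvd_mul_right _ _)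

lemma dvd_rep_inv_shiftUnit_mul_sub :
    c ∣ rep (shiftUnit hcm s * u)⁻¹.val - (1 - m * s) * rep u⁻¹.val :=
  dvd_rep_sub_of_mk_eq (by rw [map_mul, rep_mk, mul_inv_rev, Units.val_mul, mul_comm]; rfl)

lemma eC_mul_rep_inv_shiftUnit_mul (b : OK) :
    eC ((b * rep (shiftUnit hcm s * u)⁻¹.val : OK) / c) =
      eC ((b * rep u⁻¹.val : OK) / c) *
        eC ((-(b * rep u⁻¹.val) * s * m : OK) / c) := by
  rw [eC_div_congr (a' := b * rep u⁻¹.val + -(b * rep u⁻¹.val) * s * m)]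
  · push_cast
    rw [add_div, eC_add]
  · rw [show b * rep (shiftUnit hcm s * u)⁻¹.val -
        (b * rep u⁻¹.val + -(b * rep u⁻¹.val) * s * m) =
        b * (rep (shiftUnit hcm s * u)⁻¹.val -
          (1 - m * s) * rep u⁻¹.val) by ring]
    exact dvd_mul_of_dvd_right (dvd_rep_inv_shiftUnit_mul_sub hcm s u) b

end shiftUnit

/-- Summing `F (t s * u)` over `s` and `u` gives `|S| · ∑ F = 0`. -/
lemma finsum_eq_zero_of_mul_left_eq_mul {G S R : Type*} [Group G] [Finite G] [Finite S] [Nonempty S]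
    [CommRing R] [NoZeroDivisors R] [CharZero R] {F : G → R} (t : S → G) (φ : G → S → R)
    (hF : ∀ s u, F (t s * u) = F u * φ u s) (hφ : ∀ u, ∑ᶠ s, φ u s = 0) : ∑ᶠ u, F u = 0 := by
  have := Fintype.ofFinite G
  have := Fintype.ofFinite S
  simp only [finsum_eq_sum_of_fintype] at hφ ⊢
  have key : (Fintype.card S : R) * ∑ u, F u = 0 := calc
    _ = ∑ s, ∑ u, F (t s * u) := by
      rw [← nsmul_eq_mul, ← Finset.card_univ, ← Finset.sum_const]
      exact Finset.sum_congr rfl fun s _ => (Equiv.sum_comp (Equiv.mulLeft (t s)) F).symm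
    _ = ∑ u, F u * ∑ s, φ u s := by
      rw [Finset.sum_comm]
      simp only [hF, Finset.mul_sum]
    _ = 0 := by simp [hφ]
  exact (mul_eq_zero.mp key).resolve_left (Nat.cast_ne_zero.mpr Fintype.card_ne_zero)

lemma coe_mul_pow_div_pow_succ (x p : OK) (n : ℕ) (hp : p ≠ 0) :
    ((x * p ^ n : OK) : ℂ) / ((p ^ (n + 1) : OK) : ℂ) = x / p := by
  have hp' : (p : ℂ) ≠ 0 := by exact_mod_cast hp
  push_cast
  rw [pow_succ, ← mul_comm (p : ℂ), mul_div_mul_right _ _ (pow_ne_zero n hp')]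

theorem stmt3 (p z b : OK) (hp : Prime p) (hp3 : (3 : OK) ∣ p - 1)
    (k h l : ℕ) (hk : 1 < k) (hh : h < 3) (hdecomp : k = h + 3 * l)
    (hzb : IsCoprime (z * b) p) :
    ∑ᶠ u : (OK ⧸ Ideal.span {p ^ k})ˣ,
      ((cubicCharP p (rep u.val) ^ k : OK) : ℂ) *
        eC (((b * invMod (p ^ k) (rep u.val) : OK) : ℂ) / ((p ^ k : OK) : ℂ)) *
        T (z * rep u.val) 0 (p ^ h) = 0 := by
  obtain ⟨n, rfl⟩ : ∃ n, k = n + 2 := ⟨k - 2, by omega⟩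
  have hp0 := hp.ne_zero
  have := finite_quotient_span_singleton hp0
  have := finite_quotient_span_singleton (pow_ne_zero (n + 2) hp0)
  have hcm : p ^ (n + 2) ∣ (p ^ (n + 1)) ^ 2 := by
    rw [← pow_mul]
    exact pow_dvd_pow p (by omega)
  have hrep : ∀ u : (OK ⧸ Ideal.span {p ^ (n + 2)})ˣ, ¬ p ∣ rep u.val :=
    not_dvd_rep_unit hp.not_isUnit (dvd_pow_self p (by omega))
  have h3 : ¬ p ∣ 3 := fun h3 =>
    hp.not_isUnit (isUnit_of_dvd_one (by simpa using dvd_sub dvd_rfl (h3.trans hp3)))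
  have hz : ¬ p ∣ z := fun hz => hp.not_isUnit (hzb.of_mul_left_left.isUnit_of_dvd' hz dvd_rfl)
  have hb : ¬ p ∣ b := fun hb => hp.not_isUnit (hzb.of_mul_left_right.isUnit_of_dvd' hb dvd_rfl)
  refine finsum_eq_zero_of_mul_left_eq_mul (fun s : OK ⧸ Ideal.span {p} => shiftUnit hcm (rep s))
    (fun u s => eC ((-(b * rep u⁻¹.val) * rep s : OK) / p)) (fun s u => ?_)
    (fun u => finsum_eC_mul_rep_eq_zero hp0 (by simp [hp.dvd_mul, hb, hrep]))
  have hv := dvd_rep_shiftUnit_mul_sub_rep hcm (rep s) u (pow_dvd_pow p (n + 1).le_succ)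
  have hT := T_congr_of_pow_dvd (A := z * rep (shiftUnit hcm (rep s) * u).val) (A' := z * rep u.val)
    hp (by simp only [hp.dvd_mul, h3, hz, hrep, or_self, not_false_eq_true]) hh (by omega)
    (by rw [← mul_sub]; exact dvd_mul_of_dvd_right hv z)
  simp only [invMod_rep_unit]
  rw [cubicCharP_congr ((dvd_pow_self p n.succ_ne_zero).trans hv), hT,
    eC_mul_rep_inv_shiftUnit_mul, coe_mul_pow_div_pow_succ _ _ _ hp0]
  ring

end CubicSeries
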